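/- Fix δ ≥ 0, Δ > 0, and a > 0. Then: (1) the set S(a) is a closed (hence complete) subset of ℝ^𝒩; and (2) F_γ converges uniformly to F_∞ on Ŝ(a) as γ → ∞. -/

import Mathlib

/-!
On `S(a)` every squared adjacent distance stays at least `a²` away from `δ`, so each sigmoid
weight is within `exp (-γ a²)` of its Hegselmann–Krause limit, uniformly in `x`. On `Ŝ(a)` each
persuadable node has a neighbour of weight at least `1/2` in both models, so the denominators stay
bounded below and the two weighted averages differ by `O(|𝒩| Δ exp (-γ a²))`.
-/

open Finset Filter

namespace SBCM

variable {V : Type*} [Fintype V] [DecidableEq V]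

/-- Sigmoidal influence weight. -/
noncomputable def wt (G : SimpleGraph V) [DecidableRel G.Adj] (γ δ : ℝ) (x : V → ℝ)
    (i j : V) : ℝ :=
  if G.Adj i j then 1 / (1 + Real.exp (γ * (x i - x j) ^ 2 - γ * δ)) else 0

/-- SBCM update operator. -/
noncomputable def F (G : SimpleGraph V) [DecidableRel G.Adj] (Z : Finset V) (γ δ : ℝ)
    (x : V → ℝ) (i : V) : ℝ :=
  if i ∈ Z then 0
  else (∑ j, wt G γ δ x i j * (x j - x i)) / (∑ j, wt G γ δ x i j)

/-- Jacobian block over the persuadable nodes. -/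
noncomputable def Jp (G : SimpleGraph V) [DecidableRel G.Adj] (Z : Finset V) (γ δ : ℝ)
    (x : V → ℝ) : Matrix {v : V // v ∉ Z} {v : V // v ∉ Z} ℝ :=
  fun i j => fderiv ℝ (fun y : V → ℝ => F G Z γ δ y i.val) x (Pi.single (j : V) (1 : ℝ))

/-- `μ` is a (real) eigenvalue of the matrix `M`. -/
def HasEig {n : Type*} [Fintype n] (M : Matrix n n ℝ) (μ : ℝ) : Prop :=
  ∃ φ : n → ℝ, φ ≠ 0 ∧ M.mulVec φ = μ • φ

/-- All eigenvalues of `M` are strictly negative. -/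
def LinStable {n : Type*} [Fintype n] (M : Matrix n n ℝ) : Prop :=
  ∀ μ : ℝ, HasEig M μ → μ < 0

/-- `M` has a strictly positive eigenvalue. -/
def LinUnstable {n : Type*} [Fintype n] (M : Matrix n n ℝ) : Prop :=
  ∃ μ : ℝ, 0 < μ ∧ HasEig M μ

end SBCM

namespace SBCM

variable {V : Type*} [Fintype V] [DecidableEq V]

/-- Limiting (modified Hegselmann–Krause) influence weight. -/
noncomputable def wtinf (G : SimpleGraph V) [DecidableRel G.Adj] (δ : ℝ) (x : V → ℝ)
    (i j : V) : ℝ :=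
  if G.Adj i j then
    if (x i - x j) ^ 2 < δ then 1
    else if (x i - x j) ^ 2 = δ then 1 / 2
    else 0
  else 0

/-- Limiting (modified Hegselmann–Krause) update operator. -/
noncomputable def Finf (G : SimpleGraph V) [DecidableRel G.Adj] (Z : Finset V) (δ : ℝ)
    (x : V → ℝ) (i : V) : ℝ :=
  if i ∈ Z then 0
  else (∑ j, wtinf G δ x i j * (x j - x i)) / (∑ j, wtinf G δ x i j)

/-- The set `S(a)`: opinion vectors bounded by `Δ/2` in sup norm whose adjacent opinion
distances are bounded away from the confidence threshold `√δ` by `a`. -/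
def Sset (G : SimpleGraph V) (δ Δ a : ℝ) : Set (V → ℝ) :=
  {x | (∀ i j : V, G.Adj i j → a ≤ |(|x i - x j| - Real.sqrt δ)|) ∧ ∀ i, |x i| ≤ Δ / 2}

/-- The set `Ŝ(a)`: members of `S(a)` in which every persuadable node has at least one
neighbor strictly within the confidence bound. -/
def Shat (G : SimpleGraph V) [DecidableRel G.Adj] (Z : Finset V) (δ Δ a : ℝ) :
    Set (V → ℝ) :=
  {x ∈ Sset G δ Δ a | ∀ i : V, i ∉ Z → ∃ j, G.Adj i j ∧ |x i - x j| ≤ Real.sqrt δ - a}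

end SBCM

open Real Topology

theorem sq_add_sq_le_or_le_sq_of_le_abs_abs_sub_sqrt {t δ a : ℝ} (hδ : 0 ≤ δ) (ha : 0 ≤ a)
    (h : a ≤ |(|t| - √δ)|) : t ^ 2 + a ^ 2 ≤ δ ∨ δ + a ^ 2 ≤ t ^ 2 := by
  have hsq : √δ ^ 2 = δ := sq_sqrt hδ
  have hs0 : 0 ≤ √δ := sqrt_nonneg δ
  have ht0 : 0 ≤ |t| := abs_nonneg t
  rw [← sq_abs t]
  rcases le_abs'.mp h with h | h
  · left; nlinarith
  · right; nlinarith

theorem sq_le_of_abs_le_sqrt_sub {t δ a : ℝ} (hδ : 0 ≤ δ) (ha : 0 ≤ a) (h : |t| ≤ √δ - a) :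
    t ^ 2 ≤ δ := by
  rw [← sq_abs t, ← sq_sqrt hδ]
  exact pow_le_pow_left₀ (abs_nonneg t) (h.trans (by linarith)) 2

theorem one_div_one_add_exp_le_exp_neg (t : ℝ) : 1 / (1 + exp t) ≤ exp (-t) := by
  rw [exp_neg, one_div]
  exact inv_anti₀ (exp_pos t) (by linarith)

theorem abs_one_div_one_add_exp_sub_one_le (t : ℝ) : |1 / (1 + exp t) - 1| ≤ exp t := by
  have he := exp_pos t
  have heq : 1 / (1 + exp t) - 1 = -(exp t / (1 + exp t)) := by field_simp; ring
  rw [heq, abs_neg, abs_of_pos (by positivity)]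
  exact div_le_self he.le (by linarith)

theorem one_half_le_one_div_one_add_exp {t : ℝ} (ht : t ≤ 0) : 1 / 2 ≤ 1 / (1 + exp t) :=
  one_div_le_one_div_of_le (by positivity) (by linarith [exp_le_one_iff.mpr ht])

theorem abs_div_sub_div_le {N D N' D' M : ℝ} (hD : 0 < D) (hD' : 0 < D')
    (hN' : |N'| ≤ M * D') : |N' / D' - N / D| ≤ (|N' - N| + M * |D' - D|) / D := by
  have heq : N' / D' - N / D = ((N' - N) + N' / D' * (D - D')) / D := by field_simp; ring
  have havg : |N' / D'| ≤ M := by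
    rw [abs_div, abs_of_pos hD', div_le_iff₀ hD']
    exact hN'
  rw [heq, abs_div, abs_of_pos hD, abs_sub_comm D' D]
  gcongr
  calc |N' - N + N' / D' * (D - D')| ≤ |N' - N| + |N' / D'| * |D - D'| := by
        rw [← abs_mul]; exact abs_add_le _ _
    _ ≤ |N' - N| + M * |D - D'| := by gcongr

theorem abs_sum_mul_le_mul_sum {ι : Type*} [Fintype ι] {w v : ι → ℝ} {M : ℝ}
    (hw : ∀ j, 0 ≤ w j) (hv : ∀ j, |v j| ≤ M) : |∑ j, w j * v j| ≤ M * ∑ j, w j := by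
  rw [Finset.mul_sum]
  refine (Finset.abs_sum_le_sum_abs _ _).trans (Finset.sum_le_sum fun j _ => ?_)
  rw [abs_mul, abs_of_nonneg (hw j), mul_comm]
  exact mul_le_mul_of_nonneg_right (hv j) (hw j)

theorem abs_sum_sub_sum_le {ι : Type*} [Fintype ι] {f g : ι → ℝ} {c : ℝ}
    (h : ∀ j, |f j - g j| ≤ c) : |∑ j, f j - ∑ j, g j| ≤ Fintype.card ι * c := by
  rw [← Finset.sum_sub_distrib]
  refine (Finset.abs_sum_le_sum_abs _ _).trans ?_
  simpa using Finset.sum_le_sum fun j (_ : j ∈ Finset.univ) => h j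

theorem tendstoUniformlyOn_of_dist_le {ι β α : Type*} [PseudoMetricSpace α] {F : ι → β → α}
    {f : β → α} {p : Filter ι} {s : Set β} {b : ι → ℝ} (hb : Tendsto b p (𝓝 0))
    (h : ∀ᶠ n in p, ∀ x ∈ s, dist (f x) (F n x) ≤ b n) : TendstoUniformlyOn F f p s := by
  rw [Metric.tendstoUniformlyOn_iff]
  intro ε hε
  filter_upwards [h, hb.eventually_lt_const hε] with n hn hbn x hx
  exact (hn x hx).trans_lt hbn

namespace SBCM

variable {V : Type*}

theorem isClosed_Sset (G : SimpleGraph V) (δ Δ a : ℝ) : IsClosed (Sset G δ Δ a) := by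
  rw [Sset, Set.ofPred_and]
  refine IsClosed.inter ?_ ?_ <;> simp only [Set.ofPred_forall]
  · exact isClosed_iInter fun i => isClosed_iInter fun j => isClosed_iInter fun _ =>
      isClosed_le continuous_const (by fun_prop)
  · exact isClosed_iInter fun i => isClosed_le (by fun_prop) continuous_const

variable {G : SimpleGraph V} [DecidableRel G.Adj]

theorem wt_nonneg (γ δ : ℝ) (x : V → ℝ) (i j : V) : 0 ≤ wt G γ δ x i j := by
  unfold wt; split_ifs <;> positivity

theorem wtinf_nonneg (δ : ℝ) (x : V → ℝ) (i j : V) : 0 ≤ wtinf G δ x i j := by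
  unfold wtinf; split_ifs <;> norm_num

theorem one_half_le_wt {γ δ : ℝ} (hγ : 0 ≤ γ) {x : V → ℝ} {i j : V} (hij : G.Adj i j)
    (h : (x i - x j) ^ 2 ≤ δ) : 1 / 2 ≤ wt G γ δ x i j := by
  rw [wt, if_pos hij]
  exact one_half_le_one_div_one_add_exp (by nlinarith)

theorem one_half_le_wtinf {δ : ℝ} {x : V → ℝ} {i j : V} (hij : G.Adj i j)
    (h : (x i - x j) ^ 2 ≤ δ) : 1 / 2 ≤ wtinf G δ x i j := by
  rw [wtinf, if_pos hij]
  rcases h.lt_or_eq with h | h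
  · rw [if_pos h]; norm_num
  · rw [if_neg h.not_lt, if_pos h]

theorem abs_wt_sub_wtinf_le {γ δ Δ a : ℝ} (hδ : 0 ≤ δ) (ha : 0 < a) (hγ : 0 ≤ γ)
    {x : V → ℝ} (hx : x ∈ Sset G δ Δ a) (i j : V) :
    |wt G γ δ x i j - wtinf G δ x i j| ≤ exp (-(γ * a ^ 2)) := by
  by_cases hij : G.Adj i j
  · rw [wt, wtinf, if_pos hij, if_pos hij]
    rcases sq_add_sq_le_or_le_sq_of_le_abs_abs_sub_sqrt hδ ha.le (hx.1 i j hij) with h | h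
    · rw [if_pos (by nlinarith)]
      refine (abs_one_div_one_add_exp_sub_one_le _).trans (exp_le_exp.mpr ?_)
      nlinarith [mul_le_mul_of_nonneg_left h hγ]
    · rw [if_neg (by nlinarith), if_neg (by nlinarith), sub_zero, abs_of_pos (by positivity)]
      refine (one_div_one_add_exp_le_exp_neg _).trans (exp_le_exp.mpr ?_)
      nlinarith [mul_le_mul_of_nonneg_left h hγ]
  · rw [wt, wtinf, if_neg hij, if_neg hij, sub_zero, abs_zero]
    positivity

theorem abs_Finf_sub_F_le [Fintype V] [DecidableEq V] {Z : Finset V} {γ δ Δ a : ℝ}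
    (hδ : 0 ≤ δ) (hΔ : 0 ≤ Δ) (ha : 0 < a) (hγ : 0 ≤ γ) {x : V → ℝ} (hx : x ∈ Shat G Z δ Δ a) (i : V) :
    |Finf G Z δ x i - F G Z γ δ x i| ≤ 4 * Fintype.card V * Δ * exp (-(γ * a ^ 2)) := by
  by_cases hiZ : i ∈ Z
  · simp only [Finf, F, if_pos hiZ, sub_zero, abs_zero]
    positivity
  obtain ⟨j, hij, hxij⟩ := hx.2 i hiZ
  have hsq := sq_le_of_abs_le_sqrt_sub hδ ha.le hxij
  set η := exp (-(γ * a ^ 2))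
  set n : ℝ := (Fintype.card V : ℝ)
  have hdiff : ∀ k, |x k - x i| ≤ Δ := fun k => (abs_sub _ _).trans
    (by linarith [hx.1.2 k, hx.1.2 i])
  have hwt := abs_wt_sub_wtinf_le hδ ha hγ hx.1 i
  have hD : 1 / 2 ≤ ∑ k, wt G γ δ x i k := (one_half_le_wt hγ hij hsq).trans
    (Finset.single_le_sum (fun k _ => wt_nonneg γ δ x i k) (Finset.mem_univ j))
  have hD' : 0 < ∑ k, wtinf G δ x i k := lt_of_lt_of_le (by norm_num)
    ((one_half_le_wtinf hij hsq).trans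
      (Finset.single_le_sum (fun k _ => wtinf_nonneg δ x i k) (Finset.mem_univ j)))
  have hN : |∑ k, wtinf G δ x i k * (x k - x i) - ∑ k, wt G γ δ x i k * (x k - x i)|
      ≤ n * (η * Δ) := abs_sum_sub_sum_le fun k => by
    rw [← sub_mul, abs_mul, abs_sub_comm]
    exact mul_le_mul (hwt k) (hdiff k) (abs_nonneg _) (exp_pos _).le
  have hDD : |∑ k, wtinf G δ x i k - ∑ k, wt G γ δ x i k| ≤ n * η :=
    abs_sum_sub_sum_le fun k => by rw [abs_sub_comm]; exact hwt k
  rw [Finf, F, if_neg hiZ, if_neg hiZ]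
  calc _ ≤ _ := abs_div_sub_div_le (by linarith) hD'
          (abs_sum_mul_le_mul_sum (wtinf_nonneg δ x i) hdiff)
    _ ≤ (n * (η * Δ) + Δ * (n * η)) / (1 / 2) := by gcongr
    _ = 4 * n * Δ * η := by ring

end SBCM

theorem stmt_5 {V : Type*} [Fintype V] [DecidableEq V]
    (G : SimpleGraph V) [DecidableRel G.Adj] (Z : Finset V)
    (δ Δ a : ℝ) (hδ : 0 ≤ δ) (hΔ : 0 < Δ) (ha : 0 < a) :
    IsClosed (SBCM.Sset G δ Δ a) ∧
    TendstoUniformlyOn (fun (γ : ℝ) (x : V → ℝ) => SBCM.F G Z γ δ x)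
      (SBCM.Finf G Z δ) Filter.atTop (SBCM.Shat G Z δ Δ a) := by
  refine ⟨SBCM.isClosed_Sset G δ Δ a, tendstoUniformlyOn_of_dist_le
    (b := fun γ => 4 * Fintype.card V * Δ * exp (-(γ * a ^ 2))) ?_ ?_⟩
  · simpa using (tendsto_exp_neg_atTop_nhds_zero.comp
      (tendsto_id.atTop_mul_const (pow_pos ha 2))).const_mul (4 * Fintype.card V * Δ)
  · filter_upwards [eventually_ge_atTop 0] with γ hγ x hx
    refine (dist_pi_le_iff (by positivity)).mpr fun i => ?_
    rw [Real.dist_eq]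
    exact SBCM.abs_Finf_sub_F_le hδ hΔ.le ha hγ hx i
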